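/- arXiv:2210.17364 — 2 statements merged into one kernel-verified Lean document; each statement's English description precedes it below -/
import Mathlib

section
/- Let F : C → D be a symmetric monoidal functor between symmetric monoidal categories, and let X be a dualizable object of C with generalized endomorphism f : Z ⊗ X → X ⊗ Y. Then F(X) is dualizable in D, and the generalized trace of F(f) (conjugated by the structure isomorphisms F(Z ⊗ X) ≅ F(Z) ⊗ F(X) and F(X ⊗ Y) ≅ F(X) ⊗ F(Y)) equals F applied to the generalized trace of f: tr(F(f)|F(X)) = F(tr(f|X)) as morphisms F(Z) → F(Y), up to the structure isomorphisms. -/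
open CategoryTheory MonoidalCategory

universe v u v' u'

section Defs

variable {C : Type u} [Category.{v} C] [MonoidalCategory C] [SymmetricCategory C]

structure IsDualityDatum (X Y : C) (ev : Y ⊗ X ⟶ 𝟙_ C) (coev : 𝟙_ C ⟶ X ⊗ Y) : Prop where
  coevaluation_evaluation :
    Y ◁ coev ≫ (α_ Y X Y).inv ≫ ev ▷ Y = (ρ_ Y).hom ≫ (λ_ Y).inv
  evaluation_coevaluation :
    coev ▷ X ≫ (α_ X Y X).hom ≫ X ◁ ev = (λ_ X).hom ≫ (ρ_ X).inv

/-- The generalized trace of a generalized endomorphism `f : Z ⊗ X ⟶ X ⊗ W` of a dualizable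
object `X` with duality datum `(Y, ev, coev)`. -/
def gtrace (X Y : C) (ev : Y ⊗ X ⟶ 𝟙_ C) (coev : 𝟙_ C ⟶ X ⊗ Y) {Z W : C}
    (f : Z ⊗ X ⟶ X ⊗ W) : Z ⟶ W :=
  (ρ_ Z).inv ≫ (Z ◁ coev) ≫ (α_ Z X Y).inv ≫ (f ▷ Y) ≫ (β_ (X ⊗ W) Y).hom ≫
    (α_ Y X W).inv ≫ (ev ▷ W) ≫ (λ_ W).hom

end Defs

open Functor.LaxMonoidal Functor.OplaxMonoidal

/-- A (strong) symmetric monoidal functor preserves dualizability and generalized traces: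
`F(X)` is dualizable with dual `F(Y)` (the duality datum being the image of the one for `X`,
conjugated by the monoidal structure morphisms), and the generalized trace of the
conjugate `F.μ ≫ F(f) ≫ F.δ` of `F(f)` equals `F` applied to the generalized trace of `f`. -/
theorem map_gtrace {C : Type u} [Category.{v} C] [MonoidalCategory C] [SymmetricCategory C]
    {D : Type u'} [Category.{v'} D] [MonoidalCategory D] [SymmetricCategory D]
    (F : C ⥤ D) [F.Braided] {X Y Z W : C}
    (ev : Y ⊗ X ⟶ 𝟙_ C) (coev : 𝟙_ C ⟶ X ⊗ Y)
    (h : IsDualityDatum X Y ev coev) (f : Z ⊗ X ⟶ X ⊗ W) :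
    IsDualityDatum (F.obj X) (F.obj Y)
      (μ F Y X ≫ F.map ev ≫ η F)
      (ε F ≫ F.map coev ≫ δ F X Y) ∧
    gtrace (F.obj X) (F.obj Y) (μ F Y X ≫ F.map ev ≫ η F) (ε F ≫ F.map coev ≫ δ F X Y)
        (μ F Z X ≫ F.map f ≫ δ F X W) =
      F.map (gtrace X Y ev coev f) := by
  obtain ⟨hce, hec⟩ := h
  refine ⟨⟨?_, ?_⟩, ?_⟩
  · have h2 := congrArg (fun g => μ F Y (𝟙_ C) ≫ F.map g ≫ δ F (𝟙_ C) Y) hce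
    simp only [F.map_comp, Functor.Monoidal.map_associator_inv, Functor.Monoidal.map_rightUnitor,
      Functor.Monoidal.map_leftUnitor_inv, Category.assoc,
      ← μ_natural_right_assoc, ← μ_natural_left_assoc,
      Functor.Monoidal.μ_δ, Functor.Monoidal.δ_μ, Functor.Monoidal.μ_δ_assoc,
      Functor.Monoidal.δ_μ_assoc, Category.comp_id, Category.id_comp] at h2
    simp only [MonoidalCategory.whiskerLeft_comp, comp_whiskerRight, Category.assoc]
    slice_lhs 2 6 => rw [h2]
    simp [Functor.Monoidal.whiskerLeft_ε_η_assoc, whisker_exchange_assoc,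
      Functor.Monoidal.whiskerRight_ε_η]
  · have h2 := congrArg (fun g => μ F (𝟙_ C) X ≫ F.map g ≫ δ F X (𝟙_ C)) hec
    simp only [F.map_comp, Functor.Monoidal.map_associator, Functor.Monoidal.map_leftUnitor,
      Functor.Monoidal.map_rightUnitor_inv, Category.assoc,
      ← μ_natural_right_assoc, ← μ_natural_left_assoc,
      Functor.Monoidal.μ_δ, Functor.Monoidal.δ_μ, Functor.Monoidal.μ_δ_assoc,
      Functor.Monoidal.δ_μ_assoc, Category.comp_id, Category.id_comp] at h2
    simp only [MonoidalCategory.whiskerLeft_comp, comp_whiskerRight, Category.assoc]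
    slice_lhs 2 6 => rw [h2]
    simp [Functor.Monoidal.whiskerRight_ε_η_assoc, ← whisker_exchange_assoc,
      Functor.Monoidal.whiskerLeft_ε_η]
  · have hβ : F.map (β_ (X ⊗ W) Y).hom
        = δ F (X ⊗ W) Y ≫ (β_ (F.obj (X ⊗ W)) (F.obj Y)).hom ≫ μ F Y (X ⊗ W) := by
      rw [← Functor.LaxBraided.braided]
      simp
    simp only [gtrace, F.map_comp, Functor.Monoidal.map_whiskerLeft,
      Functor.Monoidal.map_whiskerRight, Functor.Monoidal.map_associator_inv,
      Functor.Monoidal.map_leftUnitor, Functor.Monoidal.map_rightUnitor_inv, hβ,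
      Category.assoc]
    simp only [MonoidalCategory.whiskerLeft_comp, comp_whiskerRight, Category.assoc,
      Functor.Monoidal.μ_δ, Functor.Monoidal.δ_μ, Functor.Monoidal.μ_δ_assoc,
      Functor.Monoidal.δ_μ_assoc, Category.comp_id, Category.id_comp]
    simp only [BraidedCategory.braiding_naturality_left,
      BraidedCategory.braiding_naturality_left_assoc]
end

section
/- Let D be a category with pullbacks and f : X → Y a morphism in D. In the bicategory of spans in D, the span (Y ← X → X) with left leg f and right leg the identity is right adjoint to the span (X ← X → Y) with left leg the identity and right leg f: there exist unit and counit 2-morphisms (morphisms of spans) given by f : X → Y over Y × Y and the diagonal Δ_f : X → X ×_Y X over X × X, satisfying the triangle identities. -/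
open CategoryTheory Limits

universe v u

variable {D : Type u} [Category.{v} D] [HasPullbacks D]

/-- A span in a category `D` from `X` to `Y`. -/
structure SpanC (X Y : D) where
  apex : D
  l : apex ⟶ X
  r : apex ⟶ Y

namespace SpanC

/-- Composition of spans, by pullback. -/
noncomputable def comp {X Y Z : D} (S : SpanC X Y) (T : SpanC Y Z) : SpanC X Z where
  apex := pullback S.r T.l
  l := pullback.fst S.r T.l ≫ S.l
  r := pullback.snd S.r T.l ≫ T.r

/-- The identity span. -/
def id (X : D) : SpanC X X := ⟨X, 𝟙 X, 𝟙 X⟩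

variable {X Y : D}

/-- The "forward" span `X ← X → Y` associated with a morphism `f : X ⟶ Y`. -/
def fwd (f : X ⟶ Y) : SpanC X Y := ⟨X, 𝟙 X, f⟩

/-- The "backward" span `Y ← X → X` associated with a morphism `f : X ⟶ Y`. -/
def bwd (f : X ⟶ Y) : SpanC Y X := ⟨X, f, 𝟙 X⟩

/-- The unit 2-cell of the adjunction `fwd f ⊣ bwd f`: the diagonal `Δ_f : X ⟶ X ×_Y X`. -/
noncomputable def unit (f : X ⟶ Y) : X ⟶ (comp (fwd f) (bwd f)).apex :=
  pullback.lift (𝟙 X) (𝟙 X) rfl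

/-- The counit 2-cell of the adjunction `fwd f ⊣ bwd f`, given by `f : X ⟶ Y`. -/
noncomputable def counit (f : X ⟶ Y) : (comp (bwd f) (fwd f)).apex ⟶ Y :=
  pullback.fst (bwd f).r (fwd f).l ≫ f

/-- Inverse left unitor for `fwd f`. -/
noncomputable def m₁ (f : X ⟶ Y) : X ⟶ (comp (SpanC.id X) (fwd f)).apex :=
  pullback.lift (𝟙 X) (𝟙 X) (by simp [SpanC.id, fwd])

/-- Whiskering `unit f ▷ fwd f`. -/
noncomputable def m₂ (f : X ⟶ Y) :
    (comp (SpanC.id X) (fwd f)).apex ⟶ (comp (comp (fwd f) (bwd f)) (fwd f)).apex :=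
  pullback.lift (pullback.fst (SpanC.id X).r (fwd f).l ≫ unit f)
    (pullback.snd (SpanC.id X).r (fwd f).l)
    (by
      have h : pullback.fst (𝟙 X) (𝟙 X) = pullback.snd (𝟙 X) (𝟙 X) := by
        simpa using pullback.condition (f := 𝟙 X) (g := 𝟙 X)
      simp [SpanC.unit, SpanC.comp, SpanC.id, fwd, bwd, h]
      erw [pullback.lift_snd, Category.comp_id])

/-- The associator `(fwd f ≫ bwd f) ≫ fwd f ⟶ fwd f ≫ (bwd f ≫ fwd f)`. -/
noncomputable def m₃ (f : X ⟶ Y) :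
    (comp (comp (fwd f) (bwd f)) (fwd f)).apex ⟶
      (comp (fwd f) (comp (bwd f) (fwd f))).apex :=
  pullback.lift
    (pullback.fst (comp (fwd f) (bwd f)).r (fwd f).l ≫ pullback.fst (fwd f).r (bwd f).l)
    (pullback.lift
      (pullback.fst (comp (fwd f) (bwd f)).r (fwd f).l ≫ pullback.snd (fwd f).r (bwd f).l)
      (pullback.snd (comp (fwd f) (bwd f)).r (fwd f).l)
      (by
        have h := pullback.condition (f := (comp (fwd f) (bwd f)).r) (g := (fwd f).l)
        simp [SpanC.comp, fwd, bwd] at h ⊢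
        simpa using h))
    (by
      have h := pullback.condition (f := (fwd f).r) (g := (bwd f).l)
      simp [SpanC.comp, fwd, bwd] at h ⊢
      erw [pullback.lift_fst_assoc]
      simp [h])

/-- Whiskering `fwd f ◁ counit f`. -/
noncomputable def m₄ (f : X ⟶ Y) :
    (comp (fwd f) (comp (bwd f) (fwd f))).apex ⟶ (comp (fwd f) (SpanC.id Y)).apex :=
  pullback.lift (pullback.fst (fwd f).r (comp (bwd f) (fwd f)).l)
    (pullback.snd (fwd f).r (comp (bwd f) (fwd f)).l ≫ counit f)
    (by
      have h := pullback.condition (f := (fwd f).r) (g := (comp (bwd f) (fwd f)).l)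
      simp [SpanC.comp, SpanC.counit, SpanC.id, fwd, bwd] at h ⊢
      simp [h])

/-- Right unitor for `fwd f`. -/
noncomputable def m₅ (f : X ⟶ Y) : (comp (fwd f) (SpanC.id Y)).apex ⟶ X :=
  pullback.fst (fwd f).r (SpanC.id Y).l

/-- Inverse right unitor for `bwd f`. -/
noncomputable def n₁ (f : X ⟶ Y) : X ⟶ (comp (bwd f) (SpanC.id X)).apex :=
  pullback.lift (𝟙 X) (𝟙 X) (by simp [SpanC.id, bwd])

/-- Whiskering `bwd f ◁ unit f`. -/
noncomputable def n₂ (f : X ⟶ Y) :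
    (comp (bwd f) (SpanC.id X)).apex ⟶ (comp (bwd f) (comp (fwd f) (bwd f))).apex :=
  pullback.lift (pullback.fst (bwd f).r (SpanC.id X).l)
    (pullback.snd (bwd f).r (SpanC.id X).l ≫ unit f)
    (by
      have h : pullback.fst (𝟙 X) (𝟙 X) = pullback.snd (𝟙 X) (𝟙 X) := by
        simpa using pullback.condition (f := 𝟙 X) (g := 𝟙 X)
      simp [SpanC.unit, SpanC.comp, SpanC.id, fwd, bwd, h]
      erw [pullback.lift_fst, Category.comp_id])

/-- The inverse associator `bwd f ≫ (fwd f ≫ bwd f) ⟶ (bwd f ≫ fwd f) ≫ bwd f`. -/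
noncomputable def n₃ (f : X ⟶ Y) :
    (comp (bwd f) (comp (fwd f) (bwd f))).apex ⟶
      (comp (comp (bwd f) (fwd f)) (bwd f)).apex :=
  pullback.lift
    (pullback.lift (pullback.fst (bwd f).r (comp (fwd f) (bwd f)).l)
      (pullback.snd (bwd f).r (comp (fwd f) (bwd f)).l ≫ pullback.fst (fwd f).r (bwd f).l)
      (by
        have h := pullback.condition (f := (bwd f).r) (g := (comp (fwd f) (bwd f)).l)
        simp [SpanC.comp, fwd, bwd] at h ⊢
        simpa using h))
    (pullback.snd (bwd f).r (comp (fwd f) (bwd f)).l ≫ pullback.snd (fwd f).r (bwd f).l)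
    (by
      have h := pullback.condition (f := (fwd f).r) (g := (bwd f).l)
      simp [SpanC.comp, fwd, bwd] at h ⊢
      erw [pullback.lift_snd_assoc]
      simp [h])

/-- Whiskering `counit f ▷ bwd f`. -/
noncomputable def n₄ (f : X ⟶ Y) :
    (comp (comp (bwd f) (fwd f)) (bwd f)).apex ⟶ (comp (SpanC.id Y) (bwd f)).apex :=
  pullback.lift (pullback.fst (comp (bwd f) (fwd f)).r (bwd f).l ≫ counit f)
    (pullback.snd (comp (bwd f) (fwd f)).r (bwd f).l)
    (by
      have h := pullback.condition (f := (comp (bwd f) (fwd f)).r) (g := (bwd f).l)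
      have h' : pullback.fst (𝟙 X) (𝟙 X) = pullback.snd (𝟙 X) (𝟙 X) := by
        simpa using pullback.condition (f := 𝟙 X) (g := 𝟙 X)
      simp [SpanC.comp, SpanC.counit, SpanC.id, fwd, bwd, h'] at h ⊢
      simp [h, h'])

/-- Left unitor for `bwd f`. -/
noncomputable def n₅ (f : X ⟶ Y) : (comp (SpanC.id Y) (bwd f)).apex ⟶ X :=
  pullback.snd (SpanC.id Y).r (bwd f).l

end SpanC

/-! Each structural 2-cell in the triangle composites is a lift into a pullback, so composing with
one projection strips it off: the left triangle follows the first projections and collapses to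
`unit f ≫ pullback.fst = 𝟙 X`, the right one follows the second projections and collapses to
`unit f ≫ pullback.snd = 𝟙 X`. Both hold because the diagonal `Δ_f` is a common section of the two
projections `X ×_Y X ⟶ X`. -/

namespace SpanC

variable {X Y : D} (f : X ⟶ Y)

theorem unit_fst : unit f ≫ pullback.fst (fwd f).r (bwd f).l = 𝟙 X :=
  pullback.lift_fst _ _ _

theorem unit_snd : unit f ≫ pullback.snd (fwd f).r (bwd f).l = 𝟙 X :=
  pullback.lift_snd _ _ _

theorem unit_comp_l : unit f ≫ (comp (fwd f) (bwd f)).l = (SpanC.id X).l := by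
  simp only [comp, fwd, SpanC.id, Category.comp_id]
  exact unit_fst f

theorem unit_comp_r : unit f ≫ (comp (fwd f) (bwd f)).r = (SpanC.id X).r := by
  simp only [comp, bwd, SpanC.id, Category.comp_id]
  exact unit_snd f

theorem counit_comp_l : counit f ≫ (SpanC.id Y).l = (comp (bwd f) (fwd f)).l :=
  Category.comp_id _

theorem counit_comp_r : counit f ≫ (SpanC.id Y).r = (comp (bwd f) (fwd f)).r := by
  simp only [counit, comp, bwd, fwd, SpanC.id, Category.comp_id, fst_eq_snd_of_mono_eq (𝟙 X)]

theorem m₁_fst : m₁ f ≫ pullback.fst (SpanC.id X).r (fwd f).l = 𝟙 X :=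
  pullback.lift_fst _ _ _

theorem m₂_fst : m₂ f ≫ pullback.fst (comp (fwd f) (bwd f)).r (fwd f).l =
    pullback.fst (SpanC.id X).r (fwd f).l ≫ unit f :=
  pullback.lift_fst _ _ _

theorem m₃_fst : m₃ f ≫ pullback.fst (fwd f).r (comp (bwd f) (fwd f)).l =
    pullback.fst (comp (fwd f) (bwd f)).r (fwd f).l ≫ pullback.fst (fwd f).r (bwd f).l :=
  pullback.lift_fst _ _ _

theorem m₄_comp_m₅ : m₄ f ≫ m₅ f = pullback.fst (fwd f).r (comp (bwd f) (fwd f)).l :=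
  pullback.lift_fst _ _ _

/- `erw`: the objects `(comp S T).apex`, `(SpanC.id X).apex`, `(fwd f).apex` in the types of the
2-cells agree with `pullback S.r T.l` and `X` only after unfolding the span constructions. -/
theorem left_triangle : m₁ f ≫ m₂ f ≫ m₃ f ≫ m₄ f ≫ m₅ f = 𝟙 X := by
  erw [m₄_comp_m₅, m₃_fst, ← Category.assoc (m₂ f), m₂_fst, Category.assoc,
    ← Category.assoc (m₁ f), m₁_fst, Category.id_comp, unit_fst]
  rfl

theorem n₁_snd : n₁ f ≫ pullback.snd (bwd f).r (SpanC.id X).l = 𝟙 X :=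
  pullback.lift_snd _ _ _

theorem n₂_snd : n₂ f ≫ pullback.snd (bwd f).r (comp (fwd f) (bwd f)).l =
    pullback.snd (bwd f).r (SpanC.id X).l ≫ unit f :=
  pullback.lift_snd _ _ _

theorem n₃_snd : n₃ f ≫ pullback.snd (comp (bwd f) (fwd f)).r (bwd f).l =
    pullback.snd (bwd f).r (comp (fwd f) (bwd f)).l ≫ pullback.snd (fwd f).r (bwd f).l :=
  pullback.lift_snd _ _ _

theorem n₄_comp_n₅ : n₄ f ≫ n₅ f = pullback.snd (comp (bwd f) (fwd f)).r (bwd f).l :=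
  pullback.lift_snd _ _ _

theorem right_triangle : n₁ f ≫ n₂ f ≫ n₃ f ≫ n₄ f ≫ n₅ f = 𝟙 X := by
  erw [n₄_comp_n₅, n₃_snd, ← Category.assoc (n₂ f), n₂_snd, Category.assoc,
    ← Category.assoc (n₁ f), n₁_snd, Category.id_comp, unit_snd]
  rfl

end SpanC

open SpanC

/-- In the bicategory of spans in a category with pullbacks, the span `Y ← X → X` (legs `f`,
`id`) is right adjoint to the span `X ← X → Y` (legs `id`, `f`): the unit (the diagonal
`Δ_f : X ⟶ X ×_Y X`) and the counit (given by `f : X ⟶ Y`) are 2-cells of spans, and they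
satisfy the two triangle identities, expressed via the canonical structural 2-cells
(unitors, associators and whiskerings) between the relevant composite spans. -/
theorem spanC_fwd_adj_bwd {X Y : D} (f : X ⟶ Y) :
    (unit f ≫ (comp (fwd f) (bwd f)).l = (SpanC.id X).l ∧
     unit f ≫ (comp (fwd f) (bwd f)).r = (SpanC.id X).r) ∧
    (counit f ≫ (SpanC.id Y).l = (comp (bwd f) (fwd f)).l ∧
     counit f ≫ (SpanC.id Y).r = (comp (bwd f) (fwd f)).r) ∧
    m₁ f ≫ m₂ f ≫ m₃ f ≫ m₄ f ≫ m₅ f = 𝟙 X ∧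
    n₁ f ≫ n₂ f ≫ n₃ f ≫ n₄ f ≫ n₅ f = 𝟙 X :=
  ⟨⟨unit_comp_l f, unit_comp_r f⟩, ⟨counit_comp_l f, counit_comp_r f⟩,
    left_triangle f, right_triangle f⟩
end
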